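/- For the function f(x) = Σ_{k=0}^∞ 2^k χ_{A_k}(x) sgn(x) on ℝ with A_k = {x : 2^k < |x| ≤ 2^k + 1}, and any fixed constant exponent 1 < p < ∞, the quantity sup_{r>0} (|B(0,r)|^{-1} ∫_{B(0,r)} |f − f_{B(0,r)}|^p)^{1/p} is infinite; hence f ∉ CBMO^p(ℝ) for p > 1, even though f ∈ CBMO^1(ℝ). -/

import Mathlib

open MeasureTheory Metric

/-- The function `f(x) = Σ_{k=0}^∞ 2^k χ_{A_k}(x) sgn(x)` on `ℝ`,
where `A_k = {x : 2^k < |x| ≤ 2^k + 1}`. -/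
noncomputable def paperF : ℝ → ℝ := fun x =>
  Real.sign x *
    ∑' k : ℕ, Set.indicator {y : ℝ | 2 ^ k < |y| ∧ |y| ≤ 2 ^ k + 1}
      (fun _ => (2 : ℝ) ^ k) x

/-! Since `f` is odd, its average over every ball `B(0, r)` vanishes, so the oscillation integral
is `∫_B |f|^p`. For `r = 2^k + 1` the ball contains `(2^k, 2^k + 1) ⊆ A_k`, where `|f| = 2^k`;
hence `∫_B |f|^p ≥ 2^{kp}` while `|B| = 2(2^k + 1)`, and the ratio `≍ 2^{k(p-1)}` is unbounded
because `p > 1`. -/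

open Set Filter

theorem measurable_tsum_of_summable {α β : Type*} [MeasurableSpace α] [TopologicalSpace β]
    [TopologicalSpace.PseudoMetrizableSpace β] [MeasurableSpace β] [BorelSpace β]
    [AddCommMonoid β] [MeasurableAdd₂ β] {f : ℕ → α → β} (hf : ∀ i, Measurable (f i))
    (hsum : ∀ x, Summable fun i => f i x) : Measurable fun x => ∑' i, f i x :=
  measurable_of_tendsto_metrizable (fun n => Finset.measurable_sum (Finset.range n) fun i _ => hf i)
    (tendsto_pi_nhds.2 fun x => by simpa using (hsum x).hasSum.tendsto_sum_nat)

theorem Function.Odd.setIntegral_eq_zero {G E : Type*} [MeasurableSpace G] [AddGroup G]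
    [MeasurableNeg G] [NormedAddCommGroup E] [NormedSpace ℝ E] {μ : Measure G} [μ.IsNegInvariant]
    {f : G → E} (hf : f.Odd) {s : Set G} (hs : -s = s) : ∫ x in s, f x ∂μ = 0 := by
  have h := (Measure.measurePreserving_neg μ).setIntegral_preimage_emb measurableEmbedding_neg f s
  rw [show Neg.neg ⁻¹' s = -s from rfl, hs] at h
  simp_rw [hf.eq, integral_neg] at h
  have h2 : (2 : ℝ) • ∫ x in s, f x ∂μ = 0 := by
    rw [two_smul]; nth_rewrite 1 [← h]; exact neg_add_cancel _
  exact (smul_eq_zero.1 h2).resolve_left two_ne_zero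

theorem Function.Odd.setAverage_ball_eq_zero {E F : Type*} [NormedAddCommGroup E]
    [MeasurableSpace E] [BorelSpace E] [NormedAddCommGroup F] [NormedSpace ℝ F] {μ : Measure E}
    [μ.IsNegInvariant] {f : E → F} (hf : f.Odd) (r : ℝ) :
    ⨍ x in ball 0 r, f x ∂μ = 0 := by
  rw [setAverage_eq, hf.setIntegral_eq_zero (by rw [neg_ball, neg_zero]), smul_zero]

def paperA (k : ℕ) : Set ℝ := {y | 2 ^ k < |y| ∧ |y| ≤ 2 ^ k + 1}

noncomputable def paperAbsF (x : ℝ) : ℝ := ∑' k, (paperA k).indicator (fun _ => (2 : ℝ) ^ k) x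

theorem measurableSet_paperA (k : ℕ) : MeasurableSet (paperA k) :=
  (measurableSet_lt measurable_const measurable_abs).inter
    (measurableSet_le measurable_abs measurable_const)

theorem neg_mem_paperA {x : ℝ} {k : ℕ} : -x ∈ paperA k ↔ x ∈ paperA k := by
  simp [paperA]

theorem eq_of_mem_paperA {x : ℝ} {i j : ℕ} (hi : x ∈ paperA i) (hj : x ∈ paperA j) : i = j := by
  -- `A_i` lies in `(2^i, 2^i + 1] ⊆ (2^i, 2^(i+1)]`, and these dyadic ranges are disjoint.
  have key : ∀ {m n : ℕ}, x ∈ paperA m → x ∈ paperA n → m < n → False := by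
    intro m n hm hn hmn
    have h1 : (2 : ℝ) ^ (m + 1) ≤ 2 ^ n := pow_le_pow_right₀ one_le_two hmn
    have h2 : (1 : ℝ) ≤ 2 ^ m := one_le_pow₀ one_le_two
    rw [pow_succ] at h1
    linarith [hm.2, hn.1]
  rcases lt_trichotomy i j with h | h | h
  exacts [(key hi hj h).elim, h, (key hj hi h).elim]

theorem paperAbsF_of_mem {x : ℝ} {j : ℕ} (hx : x ∈ paperA j) : paperAbsF x = 2 ^ j :=
  (tsum_eq_single j fun _ hi =>
    indicator_of_notMem (fun h => hi (eq_of_mem_paperA h hx)) _).trans (indicator_of_mem hx _)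

theorem paperAbsF_of_forall_notMem {x : ℝ} (hx : ∀ k, x ∉ paperA k) : paperAbsF x = 0 := by
  simp [paperAbsF, indicator_of_notMem (hx _)]

theorem paperAbsF_le_abs (x : ℝ) : paperAbsF x ≤ |x| := by
  by_cases hx : ∃ j, x ∈ paperA j
  · obtain ⟨j, hj⟩ := hx
    exact (paperAbsF_of_mem hj).le.trans hj.1.le
  · push Not at hx
    exact (paperAbsF_of_forall_notMem hx).le.trans (abs_nonneg x)

theorem measurable_paperAbsF : Measurable paperAbsF :=
  measurable_tsum_of_summable (fun k => measurable_const.indicator (measurableSet_paperA k))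
    fun _ => summable_of_hasFiniteSupport <| Set.Subsingleton.finite fun _ hi _ hj =>
      eq_of_mem_paperA (mem_of_indicator_ne_zero hi) (mem_of_indicator_ne_zero hj)

theorem abs_paperF (x : ℝ) : |paperF x| = paperAbsF x := by
  rcases eq_or_ne x 0 with rfl | hx
  · rw [paperAbsF_of_forall_notMem fun k hk => (pow_pos two_pos k).not_gt (by simpa using hk.1)]
    simp [paperF]
  · have hsign : |Real.sign x| = 1 := by
      rcases Real.sign_apply_eq_of_ne_zero x hx with h | h <;> simp [h]
    rw [paperF, abs_mul, hsign, one_mul, abs_of_nonneg]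
    · rfl
    · exact tsum_nonneg fun k => indicator_nonneg (fun _ _ => by positivity) x

theorem paperAbsF_even : paperAbsF.Even := fun x =>
  tsum_congr fun k => by by_cases hx : x ∈ paperA k <;> simp [hx, neg_mem_paperA]

theorem paperF_odd : paperF.Odd := fun x =>
  show Real.sign (-x) * paperAbsF (-x) = -(Real.sign x * paperAbsF x) by
    rw [Real.sign_neg, paperAbsF_even.eq, neg_mul]

theorem integrableOn_abs_paperF_rpow_ball {p : ℝ} (hp : 0 ≤ p) (r : ℝ) :
    IntegrableOn (fun x => |paperF x| ^ p) (ball 0 r) := by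
  simp_rw [abs_paperF]
  refine Measure.integrableOn_of_bounded (M := r ^ p) measure_ball_lt_top.ne
    (measurable_paperAbsF.pow_const p).aestronglyMeasurable ?_
  filter_upwards [ae_restrict_mem measurableSet_ball] with x hx
  have hxr : |x| < r := by simpa using hx
  have hnn : 0 ≤ paperAbsF x := (abs_nonneg _).trans_eq (abs_paperF x)
  rw [Real.norm_of_nonneg (Real.rpow_nonneg hnn p)]
  exact Real.rpow_le_rpow hnn ((paperAbsF_le_abs x).trans hxr.le) hp

theorem setIntegral_abs_paperF_rpow_Ioo (k : ℕ) (p : ℝ) :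
    ∫ x in Ioo ((2 : ℝ) ^ k) (2 ^ k + 1), |paperF x| ^ p = ((2 : ℝ) ^ k) ^ p := by
  have hA : Ioo ((2 : ℝ) ^ k) (2 ^ k + 1) ⊆ paperA k := fun x hx => by
    have hx0 : 0 < x := (pow_pos two_pos k).trans hx.1
    simpa [paperA, abs_of_pos hx0] using And.intro hx.1 hx.2.le
  rw [setIntegral_congr_fun measurableSet_Ioo fun x hx => by
    rw [abs_paperF, paperAbsF_of_mem (hA hx)]]
  simp [measureReal_def, Real.volume_Ioo]

theorem exists_mul_lt_two_pow_rpow {p : ℝ} (hp : 1 < p) (C : ℝ) :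
    ∃ k : ℕ, C * (2 * (2 ^ k + 1)) < ((2 : ℝ) ^ k) ^ p := by
  obtain ⟨k, hk⟩ : ∃ k : ℕ, 4 * |C| < ((2 : ℝ) ^ k) ^ (p - 1) :=
    ((tendsto_rpow_atTop (sub_pos.2 hp)).comp
      (tendsto_pow_atTop_atTop_of_one_lt one_lt_two)).eventually_gt_atTop _ |>.exists
  refine ⟨k, ?_⟩
  set t : ℝ := 2 ^ k
  have ht : 1 ≤ t := one_le_pow₀ one_le_two
  have hsplit : t ^ p = t ^ (p - 1) * t := by
    rw [Real.rpow_sub_one (by positivity), div_mul_cancel₀ _ (by positivity)]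
  rw [hsplit]
  nlinarith [le_abs_self C, abs_nonneg C]

/-- For any fixed `1 < p < ∞`, the quantity
`sup_{r>0} (|B(0,r)|⁻¹ ∫_{B(0,r)} |f − f_{B(0,r)}|^p)^{1/p}` is infinite for `paperF`,
i.e. `paperF ∉ CBMO^p(ℝ)` for `p > 1`. -/
theorem paperF_not_mem_central_bmo (p : ℝ) (hp : 1 < p) :
    ∀ C : ℝ, ∃ r : ℝ, 0 < r ∧
      C * (volume (ball (0 : ℝ) r)).toReal <
        ∫ x in ball (0 : ℝ) r, |paperF x - ⨍ y in ball (0 : ℝ) r, paperF y| ^ p := by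
  intro C
  obtain ⟨k, hk⟩ := exists_mul_lt_two_pow_rpow hp C
  have hA : Ioo ((2 : ℝ) ^ k) (2 ^ k + 1) ⊆ ball 0 (2 ^ k + 1) := fun x hx => by
    have hx0 : 0 < x := (pow_pos two_pos k).trans hx.1
    simpa [abs_of_pos hx0] using hx.2
  refine ⟨2 ^ k + 1, by positivity, ?_⟩
  rw [paperF_odd.setAverage_ball_eq_zero]
  calc C * (volume (ball (0 : ℝ) (2 ^ k + 1))).toReal = C * (2 * (2 ^ k + 1)) := by
        rw [Real.volume_ball, ENNReal.toReal_ofReal (by positivity)]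
    _ < ((2 : ℝ) ^ k) ^ p := hk
    _ = ∫ x in Ioo ((2 : ℝ) ^ k) (2 ^ k + 1), |paperF x| ^ p :=
        (setIntegral_abs_paperF_rpow_Ioo k p).symm
    _ ≤ ∫ x in ball (0 : ℝ) (2 ^ k + 1), |paperF x - 0| ^ p := by
        simp_rw [sub_zero]
        exact setIntegral_mono_set (integrableOn_abs_paperF_rpow_ball (by linarith) _)
          (ae_of_all _ fun x => by positivity) hA.eventuallyLE
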